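/- arXiv:0904.2960 — 2 statements merged into one kernel-verified Lean document; each statement's English description precedes it below -/
import Mathlib

section
/- Let S₁ have a bad submatrix corresponding to reactions p₁A+C₁ → p₂B and p₃A+p₄B+C₂ → C₃, i.e., the product complex of the first reaction is exactly p₂B (the column of S₁ with the positive entry of the bad submatrix has only one positive entry). Then applying the sign fixing step to this bad submatrix leaves the deficiency unchanged: δ₂ = δ₁. -/
open Finset

/-- A chemical reaction network on a species set `σ`: a finite set of
reactions, each a pair (source complex, target complex), complexes being
formal `ℕ`-linear combinations of species. -/
structure CRN (σ : Type) [DecidableEq σ] where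
  reactions : Finset ((σ → ℕ) × (σ → ℕ))

variable {σ : Type} [DecidableEq σ] [Fintype σ]

/-- The set of complexes of a CRN. -/
def CRN.complexes (R : CRN σ) : Finset (σ → ℕ) :=
  R.reactions.image Prod.fst ∪ R.reactions.image Prod.snd

/-- `n`, the number of complexes. -/
def CRN.numComplexes (R : CRN σ) : ℕ := R.complexes.card

/-- The undirected graph on complexes whose edges are the reactions. -/
def CRN.linkGraph (R : CRN σ) : SimpleGraph {c // c ∈ R.complexes} :=
  SimpleGraph.fromRel (fun a b => ((a : σ → ℕ), (b : σ → ℕ)) ∈ R.reactions)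

/-- `ℓ`, the number of linkage classes (connected components of the graph on
complexes). -/
noncomputable def CRN.numLinkage (R : CRN σ) : ℕ :=
  Nat.card (R.linkGraph.ConnectedComponent)

/-- `s`, the rank of the stoichiometric matrix, i.e. the dimension of the span
of the reaction vectors. -/
noncomputable def CRN.srank (R : CRN σ) : ℕ :=
  Module.finrank ℝ (Submodule.span ℝ
    { v : σ → ℝ | ∃ r ∈ R.reactions, v = fun i => (r.2 i : ℝ) - (r.1 i : ℝ) })

/-- The topological deficiency `δ = n - ℓ - s`. -/
noncomputable def CRN.deficiency (R : CRN σ) : ℤ :=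
  (R.numComplexes : ℤ) - R.numLinkage - R.srank

/-- The complex `p • A` consisting of `p` copies of the single species `A`. -/
def mono (A : σ) (p : ℕ) : σ → ℕ := fun i => if i = A then p else 0

/-- Extend a complex by zero at the new species `B' = none`. -/
def extC (y : σ → ℕ) : Option σ → ℕ
  | none => 0
  | some i => y i

/-- The complex `B' + C₂`, where `B' = none` is the new species. -/
def extB' (C₂ : σ → ℕ) : Option σ → ℕ
  | none => 1
  | some i => C₂ i

/-- The complex consisting of the new species `B'` alone. -/
def bPrime : Option σ → ℕ
  | none => 1
  | some _ => 0

/-- One step of the sign fixing algorithm on the CRN level: the reaction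
`p₁A + C₁ → p₂B + C₂` is replaced by `p₁A + C₁ → B' + C₂` for a new species
`B'`, the reaction `B' → p₂B` is added, and all other reactions are kept. -/
def signFixCRN (R : CRN σ) (A B : σ) (p₁ p₂ : ℕ) (C₁ C₂ : σ → ℕ) :
    CRN (Option σ) :=
  ⟨((R.reactions.erase
        ((fun i => mono A p₁ i + C₁ i), (fun i => mono B p₂ i + C₂ i))).image
      (fun r => (extC r.1, extC r.2))) ∪
    {(extC (fun i => mono A p₁ i + C₁ i), extB' C₂), (bPrime, extC (mono B p₂))}⟩

/-!
When `C₂ = 0` the sign fixing step subdivides the reaction `y₁ → y₂`, with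
`y₁ = p₁A + C₁` and `y₂ = p₂B`, into `y₁ → B' → y₂` through the complex `B'` of
the new species. This adds one complex, keeps the linkage classes (`B'` joins the
class of `y₁` and `y₂`), and raises the rank by one: the new reaction vectors span
the old ones, embedded with `B'`-coordinate `0`, together with `B' - y₁`, whose
`B'`-coordinate is `1`. Hence `δ₂ = (n + 1) - ℓ - (s + 1) = δ₁`.
-/

open Function

theorem SimpleGraph.Reachable.map_of_adj {V W : Type*} {G : SimpleGraph V} {H : SimpleGraph W}
    {f : V → W} (hf : ∀ u v, G.Adj u v → H.Reachable (f u) (f v)) {u v : V}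
    (h : G.Reachable u v) : H.Reachable (f u) (f v) := by
  rw [SimpleGraph.reachable_iff_reflTransGen] at h ⊢
  exact Relation.ReflTransGen.lift' f (fun a b hab => by
    simpa only [SimpleGraph.reachable_iff_reflTransGen] using hf a b hab) u v h

theorem SimpleGraph.natCard_connectedComponent_eq_of_reachable {V W : Type*}
    {G : SimpleGraph V} {H : SimpleGraph W} (f : V → W) (g : W → V)
    (hf : ∀ u v, G.Adj u v → H.Reachable (f u) (f v))
    (hg : ∀ u v, H.Adj u v → G.Reachable (g u) (g v))
    (hgf : ∀ v, G.Reachable (g (f v)) v) (hfg : ∀ w, H.Reachable (f (g w)) w) :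
    Nat.card G.ConnectedComponent = Nat.card H.ConnectedComponent :=
  Nat.card_congr
    { toFun := ConnectedComponent.lift (fun v => H.connectedComponentMk (f v))
        fun _ _ p _ => ConnectedComponent.sound (p.reachable.map_of_adj hf)
      invFun := ConnectedComponent.lift (fun w => G.connectedComponentMk (g w))
        fun _ _ p _ => ConnectedComponent.sound (p.reachable.map_of_adj hg)
      left_inv := ConnectedComponent.ind fun v => ConnectedComponent.sound (hgf v)
      right_inv := ConnectedComponent.ind fun w => ConnectedComponent.sound (hfg w) }

section Complexes

variable {τ : Type}

theorem extC_injective : Injective (extC (σ := τ)) := fun _ _ h =>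
  funext fun i => congrFun h (some i)

theorem extC_ne_bPrime (y : τ → ℕ) : extC y ≠ bPrime := fun h => by
  simpa [extC, bPrime] using congrFun h none

def unextC (y₁ : τ → ℕ) (c : Option τ → ℕ) : τ → ℕ :=
  if c none = 0 then fun i => c (some i) else y₁

theorem unextC_extC (y₁ x : τ → ℕ) : unextC y₁ (extC x) = x := rfl

theorem unextC_bPrime (y₁ : τ → ℕ) : unextC y₁ (bPrime : Option τ → ℕ) = y₁ := rfl

def reactionVector (r : (τ → ℕ) × (τ → ℕ)) : τ → ℝ :=
  fun i => (r.2 i : ℝ) - (r.1 i : ℝ)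

theorem reactionVector_extC (a b : τ → ℕ) :
    reactionVector (extC a, extC b) = ExtendByZero.linearMap ℝ some (reactionVector (a, b)) := by
  funext o
  cases o with
  | none => simp [reactionVector, extC]
  | some i => simp [reactionVector, extC, (Option.some_injective τ).extend_apply]

theorem reactionVector_extC_bPrime_none (a : τ → ℕ) :
    reactionVector (extC a, bPrime) none = 1 := by
  simp [reactionVector, extC, bPrime]

theorem reactionVector_bPrime_extC (a b : τ → ℕ) :
    reactionVector (bPrime, extC b) =
      ExtendByZero.linearMap ℝ some (reactionVector (a, b)) -
        reactionVector (extC a, bPrime) := by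
  rw [← reactionVector_extC]
  funext o
  cases o <;> simp [reactionVector, extC, bPrime]

end Complexes

namespace CRN

def stoichiometricSubspace {τ : Type} [DecidableEq τ] (S : CRN τ) : Submodule ℝ (τ → ℝ) :=
  Submodule.span ℝ {v | ∃ r ∈ S.reactions, v = reactionVector r}

theorem srank_eq_finrank {τ : Type} [DecidableEq τ] (S : CRN τ) :
    S.srank = Module.finrank ℝ S.stoichiometricSubspace := rfl

theorem fst_mem_complexes {R : CRN σ} {r : (σ → ℕ) × (σ → ℕ)} (hr : r ∈ R.reactions) :
    r.1 ∈ R.complexes :=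
  mem_union_left _ (mem_image_of_mem _ hr)

theorem snd_mem_complexes {R : CRN σ} {r : (σ → ℕ) × (σ → ℕ)} (hr : r ∈ R.reactions) :
    r.2 ∈ R.complexes :=
  mem_union_right _ (mem_image_of_mem _ hr)

theorem forall_mem_complexes {R : CRN σ} {P : (σ → ℕ) → Prop} :
    (∀ x ∈ R.complexes, P x) ↔ ∀ r ∈ R.reactions, P r.1 ∧ P r.2 := by
  refine ⟨fun h r hr => ⟨h _ (fst_mem_complexes hr), h _ (snd_mem_complexes hr)⟩,
    fun h x hx => ?_⟩
  rcases mem_union.1 hx with hx | hx <;> obtain ⟨r, hr, rfl⟩ := mem_image.1 hx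
  exacts [(h r hr).1, (h r hr).2]

theorem linkGraph_reachable_of_mem_reactions (R : CRN σ) {a b : {c // c ∈ R.complexes}}
    (h : ((a : σ → ℕ), (b : σ → ℕ)) ∈ R.reactions) : R.linkGraph.Reachable a b := by
  by_cases hab : a = b
  · exact hab ▸ SimpleGraph.Reachable.refl a
  · exact SimpleGraph.Adj.reachable ((SimpleGraph.fromRel_adj _ a b).2 ⟨hab, Or.inl h⟩)

theorem numLinkage_eq_of_reachable {τ : Type} [DecidableEq τ] [Fintype τ]
    {R : CRN σ} {S : CRN τ}
    (f : {c // c ∈ R.complexes} → {c // c ∈ S.complexes})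
    (g : {c // c ∈ S.complexes} → {c // c ∈ R.complexes})
    (hf : ∀ u v : {c // c ∈ R.complexes},
      ((u : σ → ℕ), (v : σ → ℕ)) ∈ R.reactions → S.linkGraph.Reachable (f u) (f v))
    (hg : ∀ u v : {c // c ∈ S.complexes},
      ((u : τ → ℕ), (v : τ → ℕ)) ∈ S.reactions → R.linkGraph.Reachable (g u) (g v))
    (hgf : ∀ u, R.linkGraph.Reachable (g (f u)) u)
    (hfg : ∀ v, S.linkGraph.Reachable (f (g v)) v) :
    R.numLinkage = S.numLinkage := by
  refine SimpleGraph.natCard_connectedComponent_eq_of_reachable f g ?_ ?_ hgf hfg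
  · intro u v huv
    obtain ⟨-, h | h⟩ := (SimpleGraph.fromRel_adj _ u v).1 huv
    exacts [hf u v h, (hf v u h).symm]
  · intro u v huv
    obtain ⟨-, h | h⟩ := (SimpleGraph.fromRel_adj _ u v).1 huv
    exacts [hg u v h, (hg v u h).symm]

def subdivide (R : CRN σ) (y₁ y₂ : σ → ℕ) : CRN (Option σ) :=
  ⟨((R.reactions.erase (y₁, y₂)).image fun r => (extC r.1, extC r.2)) ∪
    {(extC y₁, bPrime), (bPrime, extC y₂)}⟩

section Subdivide

variable (R : CRN σ) (y₁ y₂ : σ → ℕ)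

theorem mem_subdivide_reactions {r : (Option σ → ℕ) × (Option σ → ℕ)} :
    r ∈ (R.subdivide y₁ y₂).reactions ↔
      (∃ q ∈ R.reactions.erase (y₁, y₂), (extC q.1, extC q.2) = r) ∨
        r = (extC y₁, bPrime) ∨ r = (bPrime, extC y₂) := by
  simp only [subdivide, mem_union, mem_image, mem_insert, mem_singleton]

theorem complexes_subdivide (hy : (y₁, y₂) ∈ R.reactions) :
    (R.subdivide y₁ y₂).complexes = insert bPrime (R.complexes.image extC) := by
  set S := R.subdivide y₁ y₂
  have hS {r} (hr : r ∈ S.reactions) := And.intro (fst_mem_complexes hr) (snd_mem_complexes hr)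
  have hext {x} (hx : x ∈ R.complexes) : extC x ∈ insert bPrime (R.complexes.image extC) :=
    mem_insert_of_mem (mem_image_of_mem extC hx)
  refine Subset.antisymm (forall_mem_complexes.2 fun r hr => ?_)
    (insert_subset_iff.2 ⟨?_, image_subset_iff.2 (forall_mem_complexes.2 fun r hr => ?_)⟩)
  · rcases (mem_subdivide_reactions R y₁ y₂).1 hr with ⟨q, hq, rfl⟩ | rfl | rfl
    · exact ⟨hext (fst_mem_complexes (mem_of_mem_erase hq)),
        hext (snd_mem_complexes (mem_of_mem_erase hq))⟩
    · exact ⟨hext (fst_mem_complexes hy), mem_insert_self _ _⟩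
    · exact ⟨mem_insert_self _ _, hext (snd_mem_complexes hy)⟩
  · exact (hS ((mem_subdivide_reactions R y₁ y₂).2 (Or.inr (Or.inl rfl)))).2
  · by_cases h : r = (y₁, y₂)
    · subst h
      exact ⟨(hS ((mem_subdivide_reactions R _ _).2 (Or.inr (Or.inl rfl)))).1,
        (hS ((mem_subdivide_reactions R _ _).2 (Or.inr (Or.inr rfl)))).2⟩
    · exact hS ((mem_subdivide_reactions R y₁ y₂).2
        (Or.inl ⟨r, mem_erase.2 ⟨h, hr⟩, rfl⟩))

theorem numComplexes_subdivide (hy : (y₁, y₂) ∈ R.reactions) :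
    (R.subdivide y₁ y₂).numComplexes = R.numComplexes + 1 := by
  rw [numComplexes, complexes_subdivide R y₁ y₂ hy,
    card_insert_of_notMem fun h => by
      obtain ⟨y, -, hy⟩ := mem_image.1 h
      exact extC_ne_bPrime y hy,
    card_image_of_injective _ extC_injective, numComplexes]

theorem extC_mem_complexes_subdivide (hy : (y₁, y₂) ∈ R.reactions) {x : σ → ℕ}
    (hx : x ∈ R.complexes) : extC x ∈ (R.subdivide y₁ y₂).complexes := by
  rw [complexes_subdivide R y₁ y₂ hy]
  exact mem_insert_of_mem (mem_image_of_mem extC hx)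

theorem unextC_mem_complexes (hy : (y₁, y₂) ∈ R.reactions) {c : Option σ → ℕ}
    (hc : c ∈ (R.subdivide y₁ y₂).complexes) : unextC y₁ c ∈ R.complexes := by
  rw [complexes_subdivide R y₁ y₂ hy, mem_insert, mem_image] at hc
  rcases hc with rfl | ⟨x, hx, rfl⟩
  exacts [fst_mem_complexes hy, hx]

theorem linkGraph_reachable_unextC (hy : (y₁, y₂) ∈ R.reactions)
    {u v : {c // c ∈ (R.subdivide y₁ y₂).complexes}}
    (huv : ((u : Option σ → ℕ), (v : Option σ → ℕ)) ∈
      (R.subdivide y₁ y₂).reactions) :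
    R.linkGraph.Reachable ⟨unextC y₁ u, unextC_mem_complexes R y₁ y₂ hy u.2⟩
      ⟨unextC y₁ v, unextC_mem_complexes R y₁ y₂ hy v.2⟩ := by
  rcases (mem_subdivide_reactions R y₁ y₂).1 huv with ⟨q, hq, huv⟩ | huv | huv <;>
    simp only [Prod.ext_iff] at huv
  · refine R.linkGraph_reachable_of_mem_reactions ?_
    simpa [← huv.1, ← huv.2, unextC_extC] using mem_of_mem_erase hq
  · have huv' : unextC y₁ u = unextC y₁ v := by
      rw [huv.1, huv.2, unextC_extC, unextC_bPrime]
    simp only [huv']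
    exact SimpleGraph.Reachable.refl _
  · refine R.linkGraph_reachable_of_mem_reactions ?_
    simpa [huv.1, huv.2, unextC_extC, unextC_bPrime] using hy

theorem linkGraph_reachable_extC (hy : (y₁, y₂) ∈ R.reactions)
    {u v : {c // c ∈ R.complexes}}
    (huv : ((u : σ → ℕ), (v : σ → ℕ)) ∈ R.reactions) :
    (R.subdivide y₁ y₂).linkGraph.Reachable
      ⟨extC u, extC_mem_complexes_subdivide R y₁ y₂ hy u.2⟩
      ⟨extC v, extC_mem_complexes_subdivide R y₁ y₂ hy v.2⟩ := by
  set S := R.subdivide y₁ y₂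
  by_cases h : ((u : σ → ℕ), (v : σ → ℕ)) = (y₁, y₂)
  · simp only [Prod.ext_iff] at h
    have hB' : bPrime ∈ S.complexes :=
      snd_mem_complexes ((mem_subdivide_reactions R y₁ y₂).2 (Or.inr (Or.inl rfl)))
    exact (S.linkGraph_reachable_of_mem_reactions (b := ⟨bPrime, hB'⟩)
        ((mem_subdivide_reactions R y₁ y₂).2 (Or.inr (Or.inl (by simp [h.1]))))).trans
      (S.linkGraph_reachable_of_mem_reactions
        ((mem_subdivide_reactions R y₁ y₂).2 (Or.inr (Or.inr (by simp [h.2])))))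
  · exact S.linkGraph_reachable_of_mem_reactions
      ((mem_subdivide_reactions R y₁ y₂).2 (Or.inl ⟨_, mem_erase.2 ⟨h, huv⟩, rfl⟩))

theorem numLinkage_subdivide (hy : (y₁, y₂) ∈ R.reactions) :
    (R.subdivide y₁ y₂).numLinkage = R.numLinkage := by
  refine numLinkage_eq_of_reachable
    (fun u => ⟨unextC y₁ u, unextC_mem_complexes R y₁ y₂ hy u.2⟩)
    (fun x => ⟨extC x, extC_mem_complexes_subdivide R y₁ y₂ hy x.2⟩)
    (fun _ _ => linkGraph_reachable_unextC R y₁ y₂ hy)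
    (fun _ _ => linkGraph_reachable_extC R y₁ y₂ hy) (fun ⟨c, hc⟩ => ?_)
    fun _ => SimpleGraph.Reachable.refl _
  rw [complexes_subdivide R y₁ y₂ hy, mem_insert, mem_image] at hc
  rcases hc with rfl | ⟨x, -, rfl⟩
  · exact linkGraph_reachable_of_mem_reactions _
      ((mem_subdivide_reactions R y₁ y₂).2 (Or.inr (Or.inl rfl)))
  · exact SimpleGraph.Reachable.refl _

theorem stoichiometricSubspace_subdivide (hy : (y₁, y₂) ∈ R.reactions) :
    (R.subdivide y₁ y₂).stoichiometricSubspace =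
      R.stoichiometricSubspace.map (ExtendByZero.linearMap ℝ some) ⊔
        Submodule.span ℝ {reactionVector (extC y₁, bPrime)} := by
  set S := R.subdivide y₁ y₂
  have hS {r} (hr : r ∈ S.reactions) : reactionVector r ∈ S.stoichiometricSubspace :=
    Submodule.subset_span ⟨r, hr, rfl⟩
  have hw : reactionVector (extC y₁, bPrime) ∈ S.stoichiometricSubspace :=
    hS ((mem_subdivide_reactions R y₁ y₂).2 (Or.inr (Or.inl rfl)))
  refine le_antisymm (Submodule.span_le.2 ?_) (sup_le ?_ (Submodule.span_le.2 ?_))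
  · rintro _ ⟨r, hr, rfl⟩
    have hR {q} (hq : q ∈ R.reactions) :
        ExtendByZero.linearMap ℝ some (reactionVector q) ∈
          R.stoichiometricSubspace.map (ExtendByZero.linearMap ℝ some) :=
      Submodule.mem_map_of_mem (Submodule.subset_span ⟨q, hq, rfl⟩)
    rcases (mem_subdivide_reactions R y₁ y₂).1 hr with ⟨q, hq, rfl⟩ | rfl | rfl
    · exact Submodule.mem_sup_left (reactionVector_extC q.1 q.2 ▸ hR (mem_of_mem_erase hq))
    · exact Submodule.mem_sup_right (Submodule.mem_span_singleton_self _)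
    · rw [SetLike.mem_coe, reactionVector_bPrime_extC y₁]
      exact sub_mem (Submodule.mem_sup_left (hR hy))
        (Submodule.mem_sup_right (Submodule.mem_span_singleton_self _))
  · rw [Submodule.map_le_iff_le_comap, stoichiometricSubspace, Submodule.span_le]
    rintro _ ⟨r, hr, rfl⟩
    rw [SetLike.mem_coe, Submodule.mem_comap]
    by_cases h : r = (y₁, y₂)
    · subst h
      have h₂ := hS ((mem_subdivide_reactions R y₁ y₂).2 (Or.inr (Or.inr rfl)))
      rw [reactionVector_bPrime_extC y₁] at h₂
      simpa using add_mem h₂ hw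
    · rw [← reactionVector_extC]
      exact hS ((mem_subdivide_reactions R y₁ y₂).2
        (Or.inl ⟨r, mem_erase.2 ⟨h, hr⟩, rfl⟩))
  · simpa using hw

theorem srank_subdivide (hy : (y₁, y₂) ∈ R.reactions) :
    (R.subdivide y₁ y₂).srank = R.srank + 1 := by
  have hw : reactionVector (extC y₁, bPrime) ∉
      R.stoichiometricSubspace.map (ExtendByZero.linearMap ℝ some) := by
    rintro ⟨v, -, hv⟩
    simpa [reactionVector_extC_bPrime_none] using congrFun hv none
  rw [srank_eq_finrank, stoichiometricSubspace_subdivide R y₁ y₂ hy,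
    Submodule.finrank_sup_span_singleton hw, srank_eq_finrank,
    ← LinearEquiv.finrank_eq (Submodule.equivMapOfInjective _
      (extend_injective (Option.some_injective σ) 0) _)]

end Subdivide

end CRN

theorem signFixCRN_zero_eq_subdivide (R : CRN σ) (A B : σ) (p₁ p₂ : ℕ) (C₁ : σ → ℕ) :
    signFixCRN R A B p₁ p₂ C₁ (fun _ => 0) =
      R.subdivide (fun i => mono A p₁ i + C₁ i) (mono B p₂) := by
  have hB' : extB' (fun _ => 0 : σ → ℕ) = bPrime := funext fun o => by cases o <;> rfl
  simp only [signFixCRN, CRN.subdivide, hB', add_zero]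

theorem signFixCRN_deficiency_eq_of_single_product_general {d : ℕ} (N₁ : CRN (Fin d))
    (A B : Fin d) (p₁ p₂ : ℕ) (C₁ : Fin d → ℕ)
    (hr₁ : ((fun i => mono A p₁ i + C₁ i), (fun i => mono B p₂ i + (0 : ℕ)))
      ∈ N₁.reactions) :
    (signFixCRN N₁ A B p₁ p₂ C₁ (fun _ => 0)).deficiency = N₁.deficiency := by
  simp only [add_zero] at hr₁
  rw [signFixCRN_zero_eq_subdivide, CRN.deficiency, CRN.deficiency,
    CRN.numComplexes_subdivide _ _ _ hr₁, CRN.numLinkage_subdivide _ _ _ hr₁,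
    CRN.srank_subdivide _ _ _ hr₁]
  push_cast
  ring

/-- If the product complex of the replaced reaction is exactly `p₂B` (i.e.
`C₂ = ∅`), the sign fixing step leaves the deficiency unchanged: `δ₂ = δ₁`. -/
theorem signFixCRN_deficiency_eq_of_single_product {d : ℕ} (N₁ : CRN (Fin d))
    (A B : Fin d) (hAB : A ≠ B)
    (p₁ p₂ p₃ p₄ : ℕ) (hp₁ : 0 < p₁) (hp₂ : 0 < p₂) (hp₃ : 0 < p₃) (hp₄ : 0 < p₄)
    (C₁ C₂ C₃ : Fin d → ℕ)
    (hC₁ : C₁ A = 0 ∧ C₁ B = 0) (hC₂ : C₂ A = 0 ∧ C₂ B = 0)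
    (hC₃ : C₃ A = 0 ∧ C₃ B = 0)
    (hr₁ : ((fun i => mono A p₁ i + C₁ i), (fun i => mono B p₂ i + (0 : ℕ)))
      ∈ N₁.reactions)
    (hr₂ : ((fun i => mono A p₃ i + mono B p₄ i + C₂ i), C₃) ∈ N₁.reactions) :
    (signFixCRN N₁ A B p₁ p₂ C₁ (fun _ => 0)).deficiency = N₁.deficiency :=
  signFixCRN_deficiency_eq_of_single_product_general N₁ A B p₁ p₂ C₁ hr₁
end

section
/- Let Š be obtained from a d×d' matrix S by one sign fixing step at position (p, ℓ) with S_{pℓ} > 0. Then Š contains no 2×2 submatrix involving its new row d+1 or new column d'+1 whose sign pattern is, up to permutation of rows and columns, [[+,-],[-,-]]; consequently the number of such bad 2×2 submatrices of Š is strictly less than that of S. -/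
open Matrix

/-- The sign fixing step applied to `S` at the position `(p, l)`:
the entry at `(p, l)` is zeroed out, the new row `d+1` is `e_l - e_{d'+1}`,
and the new column `d'+1` has `S p l` in row `p` and zeros elsewhere. -/
def signFixMat {d d' : ℕ} (S : Matrix (Fin d) (Fin d') ℝ) (p : Fin d) (l : Fin d') :
    Matrix (Fin (d + 1)) (Fin (d' + 1)) ℝ :=
  Matrix.of fun i j =>
    if hi : (i : ℕ) < d then
      if hj : (j : ℕ) < d' then
        if (i : ℕ) = (p : ℕ) ∧ (j : ℕ) = (l : ℕ) then 0 else S ⟨i, hi⟩ ⟨j, hj⟩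
      else if (i : ℕ) = (p : ℕ) then S p l else 0
    else
      if hj : (j : ℕ) < d' then (if (j : ℕ) = (l : ℕ) then 1 else 0)
      else -1

/-- The 2×2 sign pattern with one positive and three negative entries (the
pattern `[[+,-],[-,-]]` up to permutation of rows and columns). -/
def BadPattern3 (a b c d : ℝ) : Prop :=
  (0 < a ∧ b < 0 ∧ c < 0 ∧ d < 0) ∨ (a < 0 ∧ 0 < b ∧ c < 0 ∧ d < 0) ∨
  (a < 0 ∧ b < 0 ∧ 0 < c ∧ d < 0) ∨ (a < 0 ∧ b < 0 ∧ c < 0 ∧ 0 < d)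

open scoped Classical in
/-- The number of bad 2×2 submatrices of a matrix, counted over ordered choices
of a pair of distinct rows and a pair of distinct columns. -/
noncomputable def badCount {m m' : ℕ} (M : Matrix (Fin m) (Fin m') ℝ) : ℕ :=
  (Finset.univ.filter (fun q : (Fin m × Fin m) × (Fin m' × Fin m') =>
    q.1.1 ≠ q.1.2 ∧ q.2.1 ≠ q.2.2 ∧
    BadPattern3 (M q.1.1 q.2.1) (M q.1.1 q.2.2) (M q.1.2 q.2.1) (M q.1.2 q.2.2))).card

/-!
A bad pattern has four nonzero entries. In `Š` the new row is supported on columns `l` and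
`d'+1`, and the new column on rows `p` and `d+1`; so a 2×2 submatrix with four nonzero entries
meeting the new row or column would have to use rows `p, d+1` and columns `l, d'+1`, but
`Š_{pl} = 0`. Hence every bad submatrix of `Š` lies in the old block, where `Š` agrees with `S`
away from `(p, l)`: it is a bad submatrix of `S` other than the targeted one.
-/

open Fin

theorem BadPattern3.ne_zero {a b c d : ℝ} (h : BadPattern3 a b c d) :
    a ≠ 0 ∧ b ≠ 0 ∧ c ≠ 0 ∧ d ≠ 0 := by
  unfold BadPattern3 at h
  refine ⟨?_, ?_, ?_, ?_⟩ <;> rintro rfl <;> simp at h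

section signFixMat

variable {d d' : ℕ} (S : Matrix (Fin d) (Fin d') ℝ) (p : Fin d) (l : Fin d')

@[simp]
theorem signFixMat_castSucc_castSucc (a : Fin d) (b : Fin d') :
    signFixMat S p l a.castSucc b.castSucc = if a = p ∧ b = l then 0 else S a b := by
  simp [signFixMat, Fin.ext_iff]

@[simp]
theorem signFixMat_castSucc_last (a : Fin d) :
    signFixMat S p l a.castSucc (last d') = if a = p then S p l else 0 := by
  simp [signFixMat, Fin.ext_iff]

@[simp]
theorem signFixMat_last_castSucc (b : Fin d') :
    signFixMat S p l (last d) b.castSucc = if b = l then 1 else 0 := by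
  simp [signFixMat, Fin.ext_iff]

variable {S p l}

theorem eq_castSucc_or_eq_last_of_signFixMat_last_ne_zero {k : Fin (d' + 1)}
    (h : signFixMat S p l (last d) k ≠ 0) : k = l.castSucc ∨ k = last d' := by
  rcases eq_castSucc_or_eq_last k with ⟨b, rfl⟩ | rfl
  · by_cases hb : b = l
    · exact .inl (congrArg _ hb)
    · simp [hb] at h
  · exact .inr rfl

theorem eq_castSucc_or_eq_last_of_signFixMat_ne_zero_last {i : Fin (d + 1)}
    (h : signFixMat S p l i (last d') ≠ 0) : i = p.castSucc ∨ i = last d := by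
  rcases eq_castSucc_or_eq_last i with ⟨a, rfl⟩ | rfl
  · by_cases ha : a = p
    · exact .inl (congrArg _ ha)
    · simp [ha] at h
  · exact .inr rfl

theorem signFixMat_castSucc_castSucc_of_ne_zero {a : Fin d} {b : Fin d'}
    (h : signFixMat S p l a.castSucc b.castSucc ≠ 0) :
    ¬ (a = p ∧ b = l) ∧ signFixMat S p l a.castSucc b.castSucc = S a b := by
  rw [signFixMat_castSucc_castSucc] at h ⊢
  by_cases hab : a = p ∧ b = l
  · simp [hab] at h
  · simp [hab]

theorem signFixMat_submatrix_has_zero_of_last_row {j : Fin (d + 1)} {k k' : Fin (d' + 1)}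
    (hj : j ≠ last d) (hk : k ≠ k') :
    ¬ (signFixMat S p l (last d) k ≠ 0 ∧ signFixMat S p l (last d) k' ≠ 0 ∧
      signFixMat S p l j k ≠ 0 ∧ signFixMat S p l j k' ≠ 0) := by
  rintro ⟨h₁, h₂, h₃, h₄⟩
  have key : signFixMat S p l j l.castSucc ≠ 0 → signFixMat S p l j (last d') ≠ 0 → False := by
    intro hl hlast
    obtain rfl := (eq_castSucc_or_eq_last_of_signFixMat_ne_zero_last hlast).resolve_right hj
    simp at hl
  rcases eq_castSucc_or_eq_last_of_signFixMat_last_ne_zero h₁ with rfl | rfl <;>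
    rcases eq_castSucc_or_eq_last_of_signFixMat_last_ne_zero h₂ with rfl | rfl
  · exact hk rfl
  · exact key h₃ h₄
  · exact key h₄ h₃
  · exact hk rfl

theorem signFixMat_submatrix_has_zero_of_last {i j : Fin (d + 1)} {k k' : Fin (d' + 1)}
    (hij : i ≠ j) (hk : k ≠ k')
    (hlast : i = last d ∨ j = last d ∨ k = last d' ∨ k' = last d') :
    ¬ (signFixMat S p l i k ≠ 0 ∧ signFixMat S p l i k' ≠ 0 ∧
      signFixMat S p l j k ≠ 0 ∧ signFixMat S p l j k' ≠ 0) := by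
  rintro ⟨h₁, h₂, h₃, h₄⟩
  have of_col : signFixMat S p l i (last d') ≠ 0 → signFixMat S p l j (last d') ≠ 0 →
      i = last d ∨ j = last d := by
    intro hi hj
    rcases eq_castSucc_or_eq_last_of_signFixMat_ne_zero_last hi with rfl | hi
    · exact .inr ((eq_castSucc_or_eq_last_of_signFixMat_ne_zero_last hj).resolve_left hij.symm)
    · exact .inl hi
  have hrow : i = last d ∨ j = last d := by
    rcases hlast with h | h | rfl | rfl
    exacts [.inl h, .inr h, of_col h₁ h₃, of_col h₂ h₄]
  rcases hrow with rfl | rfl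
  · exact signFixMat_submatrix_has_zero_of_last_row hij.symm hk ⟨h₁, h₂, h₃, h₄⟩
  · exact signFixMat_submatrix_has_zero_of_last_row hij hk ⟨h₃, h₄, h₁, h₂⟩

theorem signFixMat_not_badPattern_of_last {i j : Fin (d + 1)} {k k' : Fin (d' + 1)}
    (hij : i ≠ j) (hk : k ≠ k')
    (hlast : i = last d ∨ j = last d ∨ k = last d' ∨ k' = last d') :
    ¬ BadPattern3 (signFixMat S p l i k) (signFixMat S p l i k')
      (signFixMat S p l j k) (signFixMat S p l j k') :=
  fun hb => signFixMat_submatrix_has_zero_of_last hij hk hlast hb.ne_zero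

theorem badPattern_of_signFixMat_badPattern_castSucc {a b : Fin d} {c e : Fin d'}
    (hb : BadPattern3 (signFixMat S p l a.castSucc c.castSucc)
      (signFixMat S p l a.castSucc e.castSucc) (signFixMat S p l b.castSucc c.castSucc)
      (signFixMat S p l b.castSucc e.castSucc)) :
    ¬ (a = p ∧ c = l) ∧ BadPattern3 (S a c) (S a e) (S b c) (S b e) := by
  obtain ⟨h₁, h₂, h₃, h₄⟩ := hb.ne_zero
  obtain ⟨hac, eac⟩ := signFixMat_castSucc_castSucc_of_ne_zero h₁
  rw [eac, (signFixMat_castSucc_castSucc_of_ne_zero h₂).2,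
    (signFixMat_castSucc_castSucc_of_ne_zero h₃).2,
    (signFixMat_castSucc_castSucc_of_ne_zero h₄).2] at hb
  exact ⟨hac, hb⟩

theorem badCount_signFixMat_lt (hpl : 0 < S p l)
    (hbad : ∃ (i : Fin d) (k : Fin d'),
      i ≠ p ∧ k ≠ l ∧ S i l < 0 ∧ S p k < 0 ∧ S i k < 0) :
    badCount (signFixMat S p l) < badCount S := by
  classical
  obtain ⟨i₀, k₀, hi₀, hk₀, hi₀l, hpk₀, hi₀k₀⟩ := hbad
  let target : (Fin d × Fin d) × (Fin d' × Fin d') := ((p, i₀), (l, k₀))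
  let castSucc4 : (Fin d × Fin d) × (Fin d' × Fin d') →
      (Fin (d + 1) × Fin (d + 1)) × (Fin (d' + 1) × Fin (d' + 1)) :=
    Prod.map (Prod.map castSucc castSucc) (Prod.map castSucc castSucc)
  unfold badCount
  refine (Finset.card_le_card_of_surjOn castSucc4 ?_).trans_lt
    (Finset.card_erase_lt_of_mem (a := target) ?_)
  · rintro ⟨⟨i, j⟩, k, k'⟩ hq
    simp only [Finset.coe_filter, Finset.mem_univ, true_and, Set.mem_ofPred_eq] at hq
    obtain ⟨hij, hk, hb⟩ := hq
    have old := fun h => signFixMat_not_badPattern_of_last hij hk h hb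
    obtain ⟨a, rfl⟩ := (eq_castSucc_or_eq_last i).resolve_right (old ∘ .inl)
    obtain ⟨b, rfl⟩ := (eq_castSucc_or_eq_last j).resolve_right (old ∘ .inr ∘ .inl)
    obtain ⟨c, rfl⟩ := (eq_castSucc_or_eq_last k).resolve_right (old ∘ .inr ∘ .inr ∘ .inl)
    obtain ⟨e, rfl⟩ := (eq_castSucc_or_eq_last k').resolve_right (old ∘ .inr ∘ .inr ∘ .inr)
    obtain ⟨hac, hb⟩ := badPattern_of_signFixMat_badPattern_castSucc hb
    refine ⟨((a, b), (c, e)), ?_, rfl⟩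
    simp only [Finset.coe_erase, Finset.coe_filter, Finset.mem_univ, true_and,
      Set.mem_sdiff, Set.mem_ofPred_eq, Set.mem_singleton_iff]
    refine ⟨⟨fun h => hij (congrArg _ h), fun h => hk (congrArg _ h), hb⟩, fun h => hac ?_⟩
    simp only [target, Prod.mk.injEq] at h
    exact ⟨h.1.1, h.2.1⟩
  · simp only [Finset.mem_filter, Finset.mem_univ, true_and]
    exact ⟨hi₀.symm, hk₀.symm, .inl ⟨hpl, hpk₀, hi₀l, hi₀k₀⟩⟩

end signFixMat

/-- After one sign fixing step targeting a bad submatrix with positive entry at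
`(p, l)`, no bad 2×2 submatrix of `Š` involves the new row `d+1` or the new
column `d'+1`; consequently `Š` has strictly fewer bad submatrices than `S`. -/
theorem signFix_no_new_bad_submatrix {d d' : ℕ} (S : Matrix (Fin d) (Fin d') ℝ)
    (p : Fin d) (l : Fin d') (hpl : 0 < S p l)
    (hbad : ∃ (i : Fin d) (k : Fin d'),
      i ≠ p ∧ k ≠ l ∧ S i l < 0 ∧ S p k < 0 ∧ S i k < 0) :
    (∀ (i j : Fin (d + 1)) (k' l' : Fin (d' + 1)), i ≠ j → k' ≠ l' →
      (i = Fin.last d ∨ j = Fin.last d ∨ k' = Fin.last d' ∨ l' = Fin.last d') →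
      ¬ BadPattern3 ((signFixMat S p l) i k') ((signFixMat S p l) i l')
          ((signFixMat S p l) j k') ((signFixMat S p l) j l')) ∧
    badCount (signFixMat S p l) < badCount S :=
  ⟨fun _ _ _ _ hij hk hlast => signFixMat_not_badPattern_of_last hij hk hlast,
    badCount_signFixMat_lt hpl hbad⟩
end
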